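/- arXiv:1605.05109 — 2 statements merged into one kernel-verified Lean document; each statement's English description precedes it below -/
import Mathlib

section
/- In the graph RA_{k,P}(S_a, S_b): if there exists an index 0 ≤ i ≤ k−1 with S_a(i) = 1 and S_b(i) = 1, then the radius (the minimum over all vertices u of the eccentricity e(u) = max_v d(u,v)) is at most 4P + 1; and if for every 0 ≤ i ≤ k−1 either S_a(i) = 0 or S_b(i) = 0, then the radius is at least 6P + 1. -/
/-!
Statement 15: In the graph `RA_{k,P}(S_a, S_b)`: if there exists an index
`i` with `S_a(i) = 1` and `S_b(i) = 1`, then the radius (the minimum over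
all vertices `u` of the eccentricity `e(u) = max_v d(u,v)`) is at most
`4P + 1`; and if for every `i` either `S_a(i) = 0` or `S_b(i) = 0`, then the
radius is at least `6P + 1`.

Radius bounds are phrased in quantifier form: the radius is at most `c` iff
some vertex has all distances at most `c`, and at least `c` iff every vertex
has some vertex at distance at least `c`.
-/

/-- Generic graph built from "hub" vertices and "segments": each segment `s`
is a path with `len s` edges between the two hubs `ends s`, whose
`len s - 1` internal vertices are the pairs `⟨s, t⟩`.  A segment of length 1
is just an edge between its two endpoints. -/
def segGraph {Hub Seg : Type} (ends : Seg → Hub × Hub) (len : Seg → ℕ) :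
    SimpleGraph (Hub ⊕ (s : Seg) × Fin (len s - 1)) :=
  SimpleGraph.fromRel fun u v =>
    match u, v with
    | Sum.inl x, Sum.inl y => ∃ s, len s = 1 ∧ ends s = (x, y)
    | Sum.inl x, Sum.inr ⟨s, t⟩ =>
        ((ends s).1 = x ∧ (t : ℕ) = 0) ∨ ((ends s).2 = x ∧ (t : ℕ) + 2 = len s)
    | Sum.inr ⟨s, t⟩, Sum.inl x =>
        ((ends s).1 = x ∧ (t : ℕ) = 0) ∨ ((ends s).2 = x ∧ (t : ℕ) + 2 = len s)
    | Sum.inr ⟨s, t⟩, Sum.inr ⟨s', t'⟩ =>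
        s = s' ∧ ((t : ℕ) + 1 = (t' : ℕ) ∨ (t' : ℕ) + 1 = (t : ℕ))

section Generic

variable {Hub Seg : Type} {ends : Seg → Hub × Hub} {len : Seg → ℕ}

/-- the raw relation -/
def segRel (ends : Seg → Hub × Hub) (len : Seg → ℕ)
    (u v : Hub ⊕ (s : Seg) × Fin (len s - 1)) : Prop :=
  match u, v with
  | Sum.inl x, Sum.inl y => ∃ s, len s = 1 ∧ ends s = (x, y)
  | Sum.inl x, Sum.inr ⟨s, t⟩ =>
      ((ends s).1 = x ∧ (t : ℕ) = 0) ∨ ((ends s).2 = x ∧ (t : ℕ) + 2 = len s)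
  | Sum.inr ⟨s, t⟩, Sum.inl x =>
      ((ends s).1 = x ∧ (t : ℕ) = 0) ∨ ((ends s).2 = x ∧ (t : ℕ) + 2 = len s)
  | Sum.inr ⟨s, t⟩, Sum.inr ⟨s', t'⟩ =>
      s = s' ∧ ((t : ℕ) + 1 = (t' : ℕ) ∨ (t' : ℕ) + 1 = (t : ℕ))

lemma segGraph_eq : segGraph ends len = SimpleGraph.fromRel (segRel ends len) := rfl

lemma segGraph_adj {u v} :
    (segGraph ends len).Adj u v ↔ u ≠ v ∧ (segRel ends len u v ∨ segRel ends len v u) := by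
  rw [segGraph_eq]; exact SimpleGraph.fromRel_adj _ u v

lemma adj_hub (s : Seg) (h1 : len s = 1) (hne : (ends s).1 ≠ (ends s).2) :
    (segGraph ends len).Adj (Sum.inl (ends s).1) (Sum.inl (ends s).2) := by
  rw [segGraph_adj]
  exact ⟨by simpa using hne, Or.inl ⟨s, h1, Prod.mk.eta⟩⟩

lemma adj_int_zero (s : Seg) (h : 0 < len s - 1) :
    (segGraph ends len).Adj (Sum.inl (ends s).1) (Sum.inr ⟨s, ⟨0, h⟩⟩) := by
  rw [segGraph_adj]
  exact ⟨by simp, Or.inl (Or.inl ⟨rfl, rfl⟩)⟩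

lemma adj_int_last (s : Seg) (t : ℕ) (ht : t < len s - 1) (h2 : t + 2 = len s) :
    (segGraph ends len).Adj (Sum.inr ⟨s, ⟨t, ht⟩⟩) (Sum.inl (ends s).2) := by
  rw [segGraph_adj]
  exact ⟨by simp, Or.inl (Or.inr ⟨rfl, h2⟩)⟩

lemma adj_int_step (s : Seg) (t : ℕ) (ht : t < len s - 1) (ht' : t + 1 < len s - 1) :
    (segGraph ends len).Adj (Sum.inr ⟨s, ⟨t, ht⟩⟩) (Sum.inr ⟨s, ⟨t + 1, ht'⟩⟩) := by
  rw [segGraph_adj]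
  refine ⟨?_, Or.inl ⟨rfl, Or.inl rfl⟩⟩
  intro h
  simp only [Sum.inr.injEq, Sigma.mk.inj_iff, heq_eq_eq, Fin.mk.injEq, true_and] at h
  omega


/-- bounded-length walk -/
def WB {α : Type} (G : SimpleGraph α) (u v : α) (n : ℕ) : Prop :=
  ∃ w : G.Walk u v, w.length ≤ n

variable {α : Type} {G : SimpleGraph α}

lemma WB.dist_le {u v : α} {n} : WB G u v n → G.dist u v ≤ n :=
  fun ⟨w, h⟩ => le_trans (SimpleGraph.dist_le w) h

lemma WB.reachable {u v : α} {n} : WB G u v n → G.Reachable u v :=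
  fun ⟨w, _⟩ => ⟨w⟩

lemma WB.symm {u v : α} {n} : WB G u v n → WB G v u n :=
  fun ⟨w, h⟩ => ⟨w.reverse, by simpa using h⟩

lemma WB.trans {u v w : α} {a b} : WB G u v a → WB G v w b → WB G u w (a + b) :=
  fun ⟨w1, h1⟩ ⟨w2, h2⟩ => ⟨w1.append w2, by simp only [SimpleGraph.Walk.length_append]; omega⟩

lemma WB.mono {u v : α} {a b} : WB G u v a → a ≤ b → WB G u v b :=
  fun ⟨w, h⟩ hab => ⟨w, le_trans h hab⟩

lemma WB_of_adj {u v : α} (h : G.Adj u v) : WB G u v 1 :=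
  ⟨h.toWalk, by simp [SimpleGraph.Adj.toWalk]⟩

lemma WB_refl (u : α) : WB G u u 0 := ⟨.nil, by simp⟩

lemma WB_int1 (s : Seg) : ∀ (t : ℕ) (ht : t < len s - 1),
    WB (segGraph ends len) (Sum.inl (ends s).1) (Sum.inr ⟨s, ⟨t, ht⟩⟩) (t + 1)
  | 0, ht => WB_of_adj (adj_int_zero s ht)
  | (t+1), ht =>
    (WB_int1 s t (by omega)).trans (WB_of_adj (adj_int_step s t (by omega) ht))

lemma WB_int2_aux (s : Seg) (d : ℕ) : ∀ (t : ℕ) (ht : t < len s - 1), len s - 2 - t = d →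
    WB (segGraph ends len) (Sum.inl (ends s).2) (Sum.inr ⟨s, ⟨t, ht⟩⟩) (len s - 1 - t) := by
  induction d with
  | zero =>
    intro t ht hd
    have h2 : t + 2 = len s := by omega
    have : WB (segGraph ends len) (Sum.inl (ends s).2) (Sum.inr ⟨s, ⟨t, ht⟩⟩) 1 := WB_of_adj (adj_int_last (ends := ends) s t ht h2).symm
    exact this.mono (by omega)
  | succ d ih =>
    intro t ht hd
    have ht' : t + 1 < len s - 1 := by omega
    have := (ih (t+1) ht' (by omega)).trans (WB_of_adj (adj_int_step s t ht ht').symm)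
    exact this.mono (by omega)

lemma WB_int2 (s : Seg) (t : ℕ) (ht : t < len s - 1) :
    WB (segGraph ends len) (Sum.inl (ends s).2) (Sum.inr ⟨s, ⟨t, ht⟩⟩) (len s - 1 - t) :=
  WB_int2_aux s (len s - 2 - t) t ht rfl

lemma WB_ends (s : Seg) (h1 : 1 ≤ len s) (hne : (ends s).1 ≠ (ends s).2) :
    WB (segGraph ends len) (Sum.inl (ends s).1) (Sum.inl (ends s).2) (len s) := by
  by_cases h : len s = 1
  · exact (WB_of_adj (adj_hub s h hne)).mono (by omega)
  · have h2 : 2 ≤ len s := by omega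
    have hlt : len s - 2 < len s - 1 := by omega
    have := (WB_int1 (ends := ends) s (len s - 2) hlt).trans
      (WB_of_adj (adj_int_last (ends := ends) s (len s - 2) hlt (by omega)))
    exact this.mono (by omega)

end Generic

namespace RadApprox

/-- Hub vertices of `RA_{k,P}(S_a,S_b)`: two copies (indexed by `Bool`) of the
distinguished vertices of `G′`, together with the shared vertices `ℓ′_i`. -/
inductive Hub (m : ℕ) : Type
  | L : Bool → Fin (2 ^ m) → Hub m
  | R : Bool → Fin (2 ^ m) → Hub m
  | R' : Bool → Fin (2 ^ m) → Hub m
  | lk : Bool → Hub m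
  | lk1 : Bool → Hub m
  | rk : Bool → Hub m
  | rk1 : Bool → Hub m
  | F : Bool → Fin m → Hub m
  | T : Bool → Fin m → Hub m
  | F' : Bool → Fin m → Hub m
  | T' : Bool → Fin m → Hub m
  | L' : Fin (2 ^ m) → Hub m

/-- Segments (paths between hubs) of `RA_{k,P}(S_a,S_b)`; the first `Bool`
argument selects the copy of `G′`. -/
inductive Seg (m : ℕ) (Sa Sb : Fin (2 ^ m) → Bool) : Type
  | Llk : Bool → Fin (2 ^ m) → Seg m Sa Sb             -- ℓ_i – ℓ_k, length P
  | Rrk : Bool → Fin (2 ^ m) → Seg m Sa Sb             -- r_i – r_k, length P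
  | lklk1 : Bool → Seg m Sa Sb                          -- ℓ_k – ℓ_{k+1}, length 2P
  | rkrk1 : Bool → Seg m Sa Sb                          -- r_k – r_{k+1}, length 2P
  | lk1rk1 : Bool → Seg m Sa Sb                         -- edge ℓ_{k+1} – r_{k+1}
  | Lbit : Bool → Fin (2 ^ m) → Fin m → Seg m Sa Sb    -- ℓ_i – (f_j or t_j), length P
  | Rbit : Bool → Fin (2 ^ m) → Fin m → Seg m Sa Sb    -- r_i – (f'_j or t'_j), length P
  | FT' : Bool → Fin m → Seg m Sa Sb                   -- edge f_j – t'_j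
  | TF' : Bool → Fin m → Seg m Sa Sb                   -- edge t_j – f'_j
  | R'R : Bool → Fin (2 ^ m) → Seg m Sa Sb             -- r'_i – r_i, length P
  | L'L : Bool → Fin (2 ^ m) → Seg m Sa Sb             -- ℓ'_i – ℓ_{(i,c)}, length P
  | Slk1 : Bool → (i : Fin (2 ^ m)) → Sa i = true → Seg m Sa Sb
      -- ℓ_{(i,c)} – ℓ_{(k+1,c)}, length P (present iff S_a(i) = 1)
  | Srk1 : Bool → (i : Fin (2 ^ m)) → Sb i = true → Seg m Sa Sb
      -- r_{(i,c)} – r_{(k+1,c)}, length P (present iff S_b(i) = 1)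

open Hub Seg

/-- Endpoints of each segment. -/
def ends (m : ℕ) (Sa Sb : Fin (2 ^ m) → Bool) : Seg m Sa Sb → Hub m × Hub m
  | Llk c i => (L c i, lk c)
  | Rrk c i => (R c i, rk c)
  | lklk1 c => (lk c, lk1 c)
  | rkrk1 c => (rk c, rk1 c)
  | lk1rk1 c => (lk1 c, rk1 c)
  | Lbit c i j => (L c i, if Nat.testBit i.val j.val then T c j else F c j)
  | Rbit c i j => (R c i, if Nat.testBit i.val j.val then T' c j else F' c j)
  | FT' c j => (F c j, T' c j)
  | TF' c j => (T c j, F' c j)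
  | R'R c i => (R' c i, R c i)
  | L'L c i => (L' i, L c i)
  | Slk1 c i _ => (L c i, lk1 c)
  | Srk1 c i _ => (R c i, rk1 c)

/-- Length of each segment. -/
def len (m P : ℕ) (Sa Sb : Fin (2 ^ m) → Bool) : Seg m Sa Sb → ℕ
  | lk1rk1 _ => 1
  | FT' _ _ => 1
  | TF' _ _ => 1
  | lklk1 _ => 2 * P
  | rkrk1 _ => 2 * P
  | _ => P

/-- Vertices of `RA_{k,P}(S_a,S_b)`. -/
abbrev V (m P : ℕ) (Sa Sb : Fin (2 ^ m) → Bool) : Type :=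
  Hub m ⊕ (s : Seg m Sa Sb) × Fin (len m P Sa Sb s - 1)

/-- The graph `RA_{k,P}(S_a, S_b)`. -/
def RA (m P : ℕ) (Sa Sb : Fin (2 ^ m) → Bool) : SimpleGraph (V m P Sa Sb) :=
  segGraph (ends m Sa Sb) (len m P Sa Sb)

section Concrete

variable {m P : ℕ} {Sa Sb : Fin (2 ^ m) → Bool}

lemma len_pos (hP : 1 ≤ P) (s : Seg m Sa Sb) : 1 ≤ len m P Sa Sb s := by
  cases s <;> simp [len] <;> omega

lemma ends_ne (s : Seg m Sa Sb) : (ends m Sa Sb s).1 ≠ (ends m Sa Sb s).2 := by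
  cases s <;> dsimp [ends] <;> (try split) <;> simp

lemma wb_seg (hP : 1 ≤ P) (s : Seg m Sa Sb) :
    WB (RA m P Sa Sb) (Sum.inl (ends m Sa Sb s).1) (Sum.inl (ends m Sa Sb s).2)
      (len m P Sa Sb s) :=
  WB_ends s (len_pos hP s) (ends_ne s)

lemma wb_int1 (s : Seg m Sa Sb) (t : Fin (len m P Sa Sb s - 1)) :
    WB (RA m P Sa Sb) (Sum.inl (ends m Sa Sb s).1) (Sum.inr ⟨s, t⟩) (t.val + 1) :=
  WB_int1 s t.val t.isLt

lemma wb_int2 (s : Seg m Sa Sb) (t : Fin (len m P Sa Sb s - 1)) :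
    WB (RA m P Sa Sb) (Sum.inl (ends m Sa Sb s).2) (Sum.inr ⟨s, t⟩)
      (len m P Sa Sb s - 1 - t.val) :=
  WB_int2 s t.val t.isLt


lemma ends_Lbit_T {c : Bool} {j : Fin (2^m)} {b : Fin m} (h : Nat.testBit j.val b.val = true) :
    (ends m Sa Sb (Seg.Lbit c j b)).2 = Hub.T c b := by simp [ends, h]

lemma ends_Lbit_F {c : Bool} {j : Fin (2^m)} {b : Fin m} (h : Nat.testBit j.val b.val = false) :
    (ends m Sa Sb (Seg.Lbit c j b)).2 = Hub.F c b := by simp [ends, h]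

lemma ends_Rbit_T {c : Bool} {j : Fin (2^m)} {b : Fin m} (h : Nat.testBit j.val b.val = true) :
    (ends m Sa Sb (Seg.Rbit c j b)).2 = Hub.T' c b := by simp [ends, h]

lemma ends_Rbit_F {c : Bool} {j : Fin (2^m)} {b : Fin m} (h : Nat.testBit j.val b.val = false) :
    (ends m Sa Sb (Seg.Rbit c j b)).2 = Hub.F' c b := by simp [ends, h]

lemma exists_bit_ne {i j : Fin (2^m)} (h : i ≠ j) :
    ∃ b : Fin m, Nat.testBit i.val b.val ≠ Nat.testBit j.val b.val := by
  have hv : i.val ≠ j.val := fun e => h (Fin.ext e)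
  have hex : ∃ n, Nat.testBit i.val n ≠ Nat.testBit j.val n := by
    by_contra hc; push_neg at hc; exact hv (Nat.eq_of_testBit_eq hc)
  obtain ⟨n, hn⟩ := hex
  have hnm : n < m := by
    by_contra hge; push_neg at hge
    have h1 : Nat.testBit i.val n = false :=
      Nat.testBit_lt_two_pow (lt_of_lt_of_le i.isLt (Nat.pow_le_pow_right (by norm_num) hge))
    have h2 : Nat.testBit j.val n = false :=
      Nat.testBit_lt_two_pow (lt_of_lt_of_le j.isLt (Nat.pow_le_pow_right (by norm_num) hge))
    exact hn (h1.trans h2.symm)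
  exact ⟨⟨n, hnm⟩, hn⟩

lemma two_pow_fin_lt (b : Fin m) : 2 ^ b.val < 2 ^ m :=
  Nat.pow_lt_pow_right (by norm_num) b.isLt

theorem upper (hP : 1 ≤ P) (i0 : Fin (2 ^ m)) (ha : Sa i0 = true) (hb : Sb i0 = true) :
    ∀ v : V m P Sa Sb, (RA m P Sa Sb).dist (Sum.inl (Hub.L' i0)) v ≤ 4 * P + 1 := by
  set G := RA m P Sa Sb with hG
  set u0 : V m P Sa Sb := Sum.inl (Hub.L' i0) with hu0
  have wL'L : ∀ c (j : Fin (2^m)), WB G (Sum.inl (Hub.L' j)) (Sum.inl (Hub.L c j)) P :=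
    fun c j => wb_seg hP (Seg.L'L c j)
  have wLlk : ∀ c (j : Fin (2^m)), WB G (Sum.inl (Hub.L c j)) (Sum.inl (Hub.lk c)) P :=
    fun c j => wb_seg hP (Seg.Llk c j)
  have hLi0 : ∀ c, WB G u0 (Sum.inl (Hub.L c i0)) P := fun c => wL'L c i0
  have hlk : ∀ c, WB G u0 (Sum.inl (Hub.lk c)) (2*P) :=
    fun c => ((hLi0 c).trans (wLlk c i0)).mono (by omega)
  have hL : ∀ c j, WB G u0 (Sum.inl (Hub.L c j)) (3*P) :=
    fun c j => ((hlk c).trans (wLlk c j).symm).mono (by omega)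
  have hlk1 : ∀ c, WB G u0 (Sum.inl (Hub.lk1 c)) (2*P) :=
    fun c => ((hLi0 c).trans (show WB G (Sum.inl (Hub.L c i0)) (Sum.inl (Hub.lk1 c)) P from wb_seg hP (Seg.Slk1 c i0 ha))).mono (by omega)
  have hrk1 : ∀ c, WB G u0 (Sum.inl (Hub.rk1 c)) (2*P+1) :=
    fun c => ((hlk1 c).trans (show WB G (Sum.inl (Hub.lk1 c)) (Sum.inl (Hub.rk1 c)) 1 from wb_seg hP (Seg.lk1rk1 c))).mono (by omega)
  have hrk : ∀ c, WB G u0 (Sum.inl (Hub.rk c)) (4*P+1) :=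
    fun c => ((hrk1 c).trans (show WB G (Sum.inl (Hub.rk c)) (Sum.inl (Hub.rk1 c)) (2*P) from wb_seg hP (Seg.rkrk1 c)).symm).mono (by omega)
  have hRi0 : ∀ c, WB G u0 (Sum.inl (Hub.R c i0)) (3*P+1) :=
    fun c => ((hrk1 c).trans (show WB G (Sum.inl (Hub.R c i0)) (Sum.inl (Hub.rk1 c)) P from wb_seg hP (Seg.Srk1 c i0 hb)).symm).mono (by omega)
  have hR : ∀ c j, WB G u0 (Sum.inl (Hub.R c j)) (3*P+1) := by
    intro c j
    by_cases hj : j = i0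
    · subst hj; exact hRi0 c
    · obtain ⟨b, hbne⟩ := exists_bit_ne hj
      cases h1 : Nat.testBit i0.val b.val with
      | true =>
        have h0 : Nat.testBit j.val b.val = false := by
          rw [h1] at hbne; simpa using hbne
        have w1 : WB G (Sum.inl (Hub.L c i0)) (Sum.inl (Hub.T c b)) P :=
          ends_Lbit_T h1 ▸ wb_seg hP (Seg.Lbit c i0 b)
        have w2 : WB G (Sum.inl (Hub.T c b)) (Sum.inl (Hub.F' c b)) 1 :=
          wb_seg hP (Seg.TF' c b)
        have w3 : WB G (Sum.inl (Hub.R c j)) (Sum.inl (Hub.F' c b)) P :=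
          ends_Rbit_F h0 ▸ wb_seg hP (Seg.Rbit c j b)
        exact ((((hLi0 c).trans w1).trans w2).trans w3.symm).mono (by omega)
      | false =>
        have h0 : Nat.testBit j.val b.val = true := by
          rw [h1] at hbne; simpa using hbne
        have w1 : WB G (Sum.inl (Hub.L c i0)) (Sum.inl (Hub.F c b)) P :=
          ends_Lbit_F h1 ▸ wb_seg hP (Seg.Lbit c i0 b)
        have w2 : WB G (Sum.inl (Hub.F c b)) (Sum.inl (Hub.T' c b)) 1 :=
          wb_seg hP (Seg.FT' c b)
        have w3 : WB G (Sum.inl (Hub.R c j)) (Sum.inl (Hub.T' c b)) P :=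
          ends_Rbit_T h0 ▸ wb_seg hP (Seg.Rbit c j b)
        exact ((((hLi0 c).trans w1).trans w2).trans w3.symm).mono (by omega)
  have hR' : ∀ c j, WB G u0 (Sum.inl (Hub.R' c j)) (4*P+1) :=
    fun c j => ((hR c j).trans (show WB G (Sum.inl (Hub.R' c j)) (Sum.inl (Hub.R c j)) P from wb_seg hP (Seg.R'R c j)).symm).mono (by omega)
  have hF : ∀ c b, WB G u0 (Sum.inl (Hub.F c b)) (4*P) := by
    intro c b
    cases h1 : Nat.testBit i0.val b.val with
    | false =>
      have w1 : WB G (Sum.inl (Hub.L c i0)) (Sum.inl (Hub.F c b)) P :=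
        ends_Lbit_F h1 ▸ wb_seg hP (Seg.Lbit c i0 b)
      exact ((hLi0 c).trans w1).mono (by omega)
    | true =>
      set j : Fin (2^m) := ⟨i0.val ^^^ 2 ^ b.val,
        Nat.xor_lt_two_pow i0.isLt (two_pow_fin_lt b)⟩ with hj
      have hjb : Nat.testBit j.val b.val = false := by
        simp [hj, Nat.testBit_xor, h1, Nat.testBit_two_pow_self]
      have w1 : WB G (Sum.inl (Hub.L c j)) (Sum.inl (Hub.F c b)) P :=
        ends_Lbit_F hjb ▸ wb_seg hP (Seg.Lbit c j b)
      exact ((hL c j).trans w1).mono (by omega)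
  have hT : ∀ c b, WB G u0 (Sum.inl (Hub.T c b)) (4*P) := by
    intro c b
    cases h1 : Nat.testBit i0.val b.val with
    | true =>
      have w1 : WB G (Sum.inl (Hub.L c i0)) (Sum.inl (Hub.T c b)) P :=
        ends_Lbit_T h1 ▸ wb_seg hP (Seg.Lbit c i0 b)
      exact ((hLi0 c).trans w1).mono (by omega)
    | false =>
      set j : Fin (2^m) := ⟨i0.val ^^^ 2 ^ b.val,
        Nat.xor_lt_two_pow i0.isLt (two_pow_fin_lt b)⟩ with hj
      have hjb : Nat.testBit j.val b.val = true := by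
        simp [hj, Nat.testBit_xor, h1, Nat.testBit_two_pow_self]
      have w1 : WB G (Sum.inl (Hub.L c j)) (Sum.inl (Hub.T c b)) P :=
        ends_Lbit_T hjb ▸ wb_seg hP (Seg.Lbit c j b)
      exact ((hL c j).trans w1).mono (by omega)
  have hT' : ∀ c b, WB G u0 (Sum.inl (Hub.T' c b)) (4*P+1) :=
    fun c b => (hF c b).trans (wb_seg hP (Seg.FT' c b))
  have hF' : ∀ c b, WB G u0 (Sum.inl (Hub.F' c b)) (4*P+1) :=
    fun c b => (hT c b).trans (wb_seg hP (Seg.TF' c b))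
  have hL' : ∀ j, WB G u0 (Sum.inl (Hub.L' j)) (4*P+1) :=
    fun j => ((hL false j).trans (wL'L false j).symm).mono (by omega)
  have hHub : ∀ a : Hub m, WB G u0 (Sum.inl a) (4*P+1) := by
    intro a
    cases a with
    | L c j => exact (hL c j).mono (by omega)
    | R c j => exact (hR c j).mono (by omega)
    | R' c j => exact hR' c j
    | lk c => exact (hlk c).mono (by omega)
    | lk1 c => exact (hlk1 c).mono (by omega)
    | rk c => exact hrk c
    | rk1 c => exact (hrk1 c).mono (by omega)
    | F c b => exact (hF c b).mono (by omega)
    | T c b => exact (hT c b).mono (by omega)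
    | F' c b => exact hF' c b
    | T' c b => exact hT' c b
    | L' j => exact hL' j
  rintro (a | ⟨s, t⟩)
  · exact (hHub a).dist_le
  · cases s with
    | Llk c j =>
      have ht : (t : ℕ) < P - 1 := t.isLt
      exact (((hL c j).trans (wb_int1 (Seg.Llk c j) t)).mono (by omega)).dist_le
    | Rrk c j =>
      have ht : (t : ℕ) < P - 1 := t.isLt
      exact (((hR c j).trans (wb_int1 (Seg.Rrk c j) t)).mono (by omega)).dist_le
    | lklk1 c =>
      have ht : (t : ℕ) < 2*P - 1 := t.isLt
      exact (((hlk c).trans (wb_int1 (Seg.lklk1 c) t)).mono (by omega)).dist_le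
    | rkrk1 c =>
      have ht : (t : ℕ) < 2*P - 1 := t.isLt
      have hlen : len m P Sa Sb (Seg.rkrk1 c) = 2*P := rfl
      exact (((hrk1 c).trans (wb_int2 (Seg.rkrk1 c) t)).mono (by omega)).dist_le
    | lk1rk1 c => exact absurd (show (t:ℕ) < 0 from t.isLt) (by omega)
    | FT' c b => exact absurd (show (t:ℕ) < 0 from t.isLt) (by omega)
    | TF' c b => exact absurd (show (t:ℕ) < 0 from t.isLt) (by omega)
    | Lbit c j b =>
      have ht : (t : ℕ) < P - 1 := t.isLt
      exact (((hL c j).trans (wb_int1 (Seg.Lbit c j b) t)).mono (by omega)).dist_le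
    | Rbit c j b =>
      have ht : (t : ℕ) < P - 1 := t.isLt
      exact (((hR c j).trans (wb_int1 (Seg.Rbit c j b) t)).mono (by omega)).dist_le
    | R'R c j =>
      have ht : (t : ℕ) < P - 1 := t.isLt
      have hlen : len m P Sa Sb (Seg.R'R c j) = P := rfl
      exact (((hR c j).trans (wb_int2 (Seg.R'R c j) t)).mono (by omega)).dist_le
    | L'L c j =>
      have ht : (t : ℕ) < P - 1 := t.isLt
      have hlen : len m P Sa Sb (Seg.L'L c j) = P := rfl
      exact (((hL c j).trans (wb_int2 (Seg.L'L c j) t)).mono (by omega)).dist_le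
    | Slk1 c j hs =>
      have ht : (t : ℕ) < P - 1 := t.isLt
      have hlen : len m P Sa Sb (Seg.Slk1 c j hs) = P := rfl
      exact (((hlk1 c).trans (wb_int2 (Seg.Slk1 c j hs) t)).mono (by omega)).dist_le
    | Srk1 c j hs =>
      have ht : (t : ℕ) < P - 1 := t.isLt
      have hlen : len m P Sa Sb (Seg.Srk1 c j hs) = P := rfl
      exact (((hrk1 c).trans (wb_int2 (Seg.Srk1 c j hs) t)).mono (by omega)).dist_le


end Concrete

/-- Potential function on hubs: a 1-Lipschitz-per-segment lower bound for the
distance to `R' τ i0` (capped at `6P+1`), valid when `Sa` and `Sb` are disjoint.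
`sb` should be `Sb i0`. -/
def pot (m P : ℕ) (i0 : Fin (2 ^ m)) (sb : Bool) (τ : Bool) : Hub m → ℕ
  | .L c j => if c = τ then (if j = i0 then 5*P+1 else 3*P+1)
      else (if j = i0 then 6*P+1 else 5*P+1)
  | .R c j => if c = τ then (if j = i0 then P else 3*P) else 6*P+1
  | .R' c j => if c = τ then (if j = i0 then 0 else 4*P) else 6*P+1
  | .lk c => if c = τ then 4*P+1 else 6*P+1
  | .lk1 c => if c = τ then (if sb then 2*P else 4*P) + 1 else 6*P+1
  | .rk c => if c = τ then 2*P else 6*P+1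
  | .rk1 c => if c = τ then (if sb then 2*P else 4*P) else 6*P+1
  | .F c b => if c = τ then (if Nat.testBit i0.val b.val then 2*P+1 else 4*P+1) else 6*P+1
  | .T c b => if c = τ then (if Nat.testBit i0.val b.val then 4*P+1 else 2*P+1) else 6*P+1
  | .F' c b => if c = τ then (if Nat.testBit i0.val b.val then 4*P else 2*P) else 6*P+1
  | .T' c b => if c = τ then (if Nat.testBit i0.val b.val then 2*P else 4*P) else 6*P+1
  | .L' j => if j = i0 then 6*P+1 else 4*P+1

section Pot

variable {m P : ℕ} {Sa Sb : Fin (2 ^ m) → Bool}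

/-- Segment-Lipschitz property of `pot`. -/
lemma pot_lip (hP : 1 ≤ P) (disj : ∀ i, Sa i = false ∨ Sb i = false)
    (i0 : Fin (2 ^ m)) (τ : Bool) (s : Seg m Sa Sb) :
    pot m P i0 (Sb i0) τ (ends m Sa Sb s).1 ≤
      pot m P i0 (Sb i0) τ (ends m Sa Sb s).2 + len m P Sa Sb s ∧
    pot m P i0 (Sb i0) τ (ends m Sa Sb s).2 ≤
      pot m P i0 (Sb i0) τ (ends m Sa Sb s).1 + len m P Sa Sb s := by
  have hsb : Sa i0 = true → Sb i0 = false := fun h => by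
    rcases disj i0 with h' | h' <;> simp_all
  cases s with
  | Llk c j => simp only [ends, len, pot]; split_ifs <;> omega
  | Rrk c j => simp only [ends, len, pot]; split_ifs <;> omega
  | lklk1 c => simp only [ends, len, pot]; split_ifs <;> omega
  | rkrk1 c => simp only [ends, len, pot]; split_ifs <;> omega
  | lk1rk1 c => simp only [ends, len, pot]; split_ifs <;> omega
  | FT' c b => simp only [ends, len, pot]; split_ifs <;> omega
  | TF' c b => simp only [ends, len, pot]; split_ifs <;> omega
  | R'R c j => simp only [ends, len, pot]; split_ifs <;> omega
  | L'L c j => simp only [ends, len, pot]; split_ifs <;> omega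
  | Lbit c j b =>
    by_cases hj : j = i0
    · subst hj
      cases hbit : Nat.testBit j.val b.val <;>
        (simp only [ends, len, pot, hbit, if_true, if_false]
         split_ifs <;> (try simp_all) <;> (try split_ifs) <;> omega)
    · cases hbit : Nat.testBit j.val b.val <;>
        (simp only [ends, len, pot, hbit, if_true, if_false]
         split_ifs <;> (try simp_all) <;> (try split_ifs) <;> omega)
  | Rbit c j b =>
    by_cases hj : j = i0
    · subst hj
      cases hbit : Nat.testBit j.val b.val <;>
        (simp only [ends, len, pot, hbit, if_true, if_false]
         split_ifs <;> (try simp_all) <;> (try split_ifs) <;> omega)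
    · cases hbit : Nat.testBit j.val b.val <;>
        (simp only [ends, len, pot, hbit, if_true, if_false]
         split_ifs <;> (try simp_all) <;> (try split_ifs) <;> omega)
  | Slk1 c j h =>
    simp only [ends, len, pot]; split_ifs <;> (try simp_all) <;> (try split_ifs) <;> omega
  | Srk1 c j h =>
    simp only [ends, len, pot]; split_ifs <;> (try simp_all) <;> (try split_ifs) <;> omega

end Pot

/-- Extension of `pot` to all vertices. -/
def potV (m P : ℕ) (Sa Sb : Fin (2 ^ m) → Bool) (i0 : Fin (2 ^ m)) (sb τ : Bool) :
    V m P Sa Sb → ℕ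
  | .inl a => pot m P i0 sb τ a
  | .inr ⟨s, t⟩ =>
      min (pot m P i0 sb τ (ends m Sa Sb s).1 + (t.val + 1))
        (pot m P i0 sb τ (ends m Sa Sb s).2 + (len m P Sa Sb s - 1 - t.val))

section Pot2

variable {m P : ℕ} {Sa Sb : Fin (2 ^ m) → Bool}

lemma potV_lip (hP : 1 ≤ P) (disj : ∀ i, Sa i = false ∨ Sb i = false)
    (i0 : Fin (2 ^ m)) (τ : Bool) {u v : V m P Sa Sb}
    (h : (RA m P Sa Sb).Adj u v) :
    potV m P Sa Sb i0 (Sb i0) τ u ≤ potV m P Sa Sb i0 (Sb i0) τ v + 1 := by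
  rw [RA, segGraph_adj] at h
  obtain ⟨hne, hrel⟩ := h
  rcases u with a | ⟨s, t⟩ <;> rcases v with b | ⟨s', t'⟩
  · -- hub-hub
    rcases hrel with ⟨s, h1, hends⟩ | ⟨s, h1, hends⟩
    · have hl := pot_lip (Sa := Sa) hP disj i0 τ s
      have he1 : (ends m Sa Sb s).1 = a := by rw [hends]
      have he2 : (ends m Sa Sb s).2 = b := by rw [hends]
      rw [he1, he2, h1] at hl
      simp only [potV]
      omega
    · have hl := pot_lip (Sa := Sa) hP disj i0 τ s
      have he1 : (ends m Sa Sb s).1 = b := by rw [hends]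
      have he2 : (ends m Sa Sb s).2 = a := by rw [hends]
      rw [he1, he2, h1] at hl
      simp only [potV]
      omega
  · -- hub-internal
    have hrel' : ((ends m Sa Sb s').1 = a ∧ (t' : ℕ) = 0) ∨
        ((ends m Sa Sb s').2 = a ∧ (t' : ℕ) + 2 = len m P Sa Sb s') := hrel.elim id id
    have hl := pot_lip (Sa := Sa) hP disj i0 τ s'
    have htl := t'.isLt
    simp only [potV]
    rcases hrel' with ⟨he, ht0⟩ | ⟨he, ht0⟩ <;> rw [← he] <;> omega
  · -- internal-hub
    have hrel' : ((ends m Sa Sb s).1 = b ∧ (t : ℕ) = 0) ∨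
        ((ends m Sa Sb s).2 = b ∧ (t : ℕ) + 2 = len m P Sa Sb s) := hrel.elim id id
    have hl := pot_lip (Sa := Sa) hP disj i0 τ s
    have htl := t.isLt
    simp only [potV]
    rcases hrel' with ⟨he, ht0⟩ | ⟨he, ht0⟩ <;> rw [← he] <;> omega
  · -- internal-internal
    have hrel' : s = s' ∧ ((t : ℕ) + 1 = (t' : ℕ) ∨ (t' : ℕ) + 1 = (t : ℕ)) :=
      hrel.elim id (fun ⟨he, h2⟩ => ⟨he.symm, h2.symm⟩)
    obtain ⟨rfl, hstep⟩ := hrel'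
    have htl := t.isLt
    have htl' := t'.isLt
    simp only [potV]
    omega

lemma potV_walk (hP : 1 ≤ P) (disj : ∀ i, Sa i = false ∨ Sb i = false)
    (i0 : Fin (2 ^ m)) (τ : Bool) {u v : V m P Sa Sb}
    (w : (RA m P Sa Sb).Walk u v) :
    potV m P Sa Sb i0 (Sb i0) τ u ≤ potV m P Sa Sb i0 (Sb i0) τ v + w.length := by
  induction w with
  | nil => simp
  | cons hadj p ih =>
    have := potV_lip hP disj i0 τ hadj
    simp only [SimpleGraph.Walk.length_cons]
    omega

lemma dist_ge (hP : 1 ≤ P) (disj : ∀ i, Sa i = false ∨ Sb i = false)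
    (i0 : Fin (2 ^ m)) (τ : Bool) {u v : V m P Sa Sb}
    (hreach : (RA m P Sa Sb).Reachable u v)
    (hv : potV m P Sa Sb i0 (Sb i0) τ v = 0)
    (hu : 6*P+1 ≤ potV m P Sa Sb i0 (Sb i0) τ u) :
    6*P+1 ≤ (RA m P Sa Sb).dist u v := by
  obtain ⟨w, hw⟩ := hreach.exists_walk_length_eq_dist
  have := potV_walk hP disj i0 τ w
  omega

end Pot2

section Reach

variable {m P : ℕ} {Sa Sb : Fin (2 ^ m) → Bool}

/-- the base vertex for connectivity -/
def fin0 (m : ℕ) : Fin (2 ^ m) := ⟨0, by positivity⟩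

lemma reachHub (hP : 1 ≤ P) (a : Hub m) :
    (RA m P Sa Sb).Reachable (Sum.inl a) (Sum.inl (Hub.L' (fin0 m))) := by
  have rs : ∀ s : Seg m Sa Sb, (RA m P Sa Sb).Reachable
      (Sum.inl (ends m Sa Sb s).1) (Sum.inl (ends m Sa Sb s).2) :=
    fun s => (wb_seg hP s).reachable
  have rbase : ∀ c, (RA m P Sa Sb).Reachable (Sum.inl (Hub.L c (fin0 m)))
      (Sum.inl (Hub.L' (fin0 m))) := fun c => (rs (Seg.L'L c (fin0 m))).symm
  have rlk : ∀ c, (RA m P Sa Sb).Reachable (Sum.inl (Hub.lk c))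
      (Sum.inl (Hub.L' (fin0 m))) :=
    fun c => ((rs (Seg.Llk c (fin0 m))).symm).trans (rbase c)
  have rL : ∀ c j, (RA m P Sa Sb).Reachable (Sum.inl (Hub.L c j))
      (Sum.inl (Hub.L' (fin0 m))) := fun c j => (rs (Seg.Llk c j)).trans (rlk c)
  have rlk1 : ∀ c, (RA m P Sa Sb).Reachable (Sum.inl (Hub.lk1 c))
      (Sum.inl (Hub.L' (fin0 m))) := fun c => ((rs (Seg.lklk1 c)).symm).trans (rlk c)
  have rrk1 : ∀ c, (RA m P Sa Sb).Reachable (Sum.inl (Hub.rk1 c))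
      (Sum.inl (Hub.L' (fin0 m))) := fun c => ((rs (Seg.lk1rk1 c)).symm).trans (rlk1 c)
  have rrk : ∀ c, (RA m P Sa Sb).Reachable (Sum.inl (Hub.rk c))
      (Sum.inl (Hub.L' (fin0 m))) := fun c => (rs (Seg.rkrk1 c)).trans (rrk1 c)
  have rR : ∀ c j, (RA m P Sa Sb).Reachable (Sum.inl (Hub.R c j))
      (Sum.inl (Hub.L' (fin0 m))) := fun c j => (rs (Seg.Rrk c j)).trans (rrk c)
  have rR' : ∀ c j, (RA m P Sa Sb).Reachable (Sum.inl (Hub.R' c j))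
      (Sum.inl (Hub.L' (fin0 m))) := fun c j => (rs (Seg.R'R c j)).trans (rR c j)
  have rF : ∀ c b, (RA m P Sa Sb).Reachable (Sum.inl (Hub.F c b))
      (Sum.inl (Hub.L' (fin0 m))) := by
    intro c b
    have hb0 : Nat.testBit (fin0 m).val b.val = false := by simp [fin0]
    exact ((ends_Lbit_F (Sa := Sa) (Sb := Sb) (c := c) hb0 ▸
      rs (Seg.Lbit c (fin0 m) b)).symm).trans (rL c (fin0 m))
  have rT : ∀ c b, (RA m P Sa Sb).Reachable (Sum.inl (Hub.T c b))
      (Sum.inl (Hub.L' (fin0 m))) := by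
    intro c b
    set j2 : Fin (2 ^ m) := ⟨2 ^ b.val, two_pow_fin_lt b⟩ with hj2
    have hb1 : Nat.testBit j2.val b.val = true := by
      simp [hj2, Nat.testBit_two_pow_self]
    exact ((ends_Lbit_T (Sa := Sa) (Sb := Sb) (c := c) hb1 ▸
      rs (Seg.Lbit c j2 b)).symm).trans (rL c j2)
  have rT' : ∀ c b, (RA m P Sa Sb).Reachable (Sum.inl (Hub.T' c b))
      (Sum.inl (Hub.L' (fin0 m))) := fun c b => ((rs (Seg.FT' c b)).symm).trans (rF c b)
  have rF' : ∀ c b, (RA m P Sa Sb).Reachable (Sum.inl (Hub.F' c b))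
      (Sum.inl (Hub.L' (fin0 m))) := fun c b => ((rs (Seg.TF' c b)).symm).trans (rT c b)
  have rL' : ∀ j, (RA m P Sa Sb).Reachable (Sum.inl (Hub.L' j))
      (Sum.inl (Hub.L' (fin0 m))) := fun j => (rs (Seg.L'L false j)).trans (rL false j)
  cases a with
  | L c j => exact rL c j
  | R c j => exact rR c j
  | R' c j => exact rR' c j
  | lk c => exact rlk c
  | lk1 c => exact rlk1 c
  | rk c => exact rrk c
  | rk1 c => exact rrk1 c
  | F c b => exact rF c b
  | T c b => exact rT c b
  | F' c b => exact rF' c b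
  | T' c b => exact rT' c b
  | L' j => exact rL' j

lemma reach_all (hP : 1 ≤ P) (v : V m P Sa Sb) :
    (RA m P Sa Sb).Reachable v (Sum.inl (Hub.L' (fin0 m))) := by
  rcases v with a | ⟨s, t⟩
  · exact reachHub hP a
  · exact ((wb_int1 s t).reachable).symm.trans (reachHub hP (ends m Sa Sb s).1)

theorem lower (hP : 1 ≤ P) (disj : ∀ i, Sa i = false ∨ Sb i = false)
    (u : V m P Sa Sb) : ∃ v, 6 * P + 1 ≤ (RA m P Sa Sb).dist u v := by
  have key : ∃ (i0 : Fin (2 ^ m)) (τ : Bool),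
      6 * P + 1 ≤ potV m P Sa Sb i0 (Sb i0) τ u := by
    rcases u with a | ⟨s, t⟩
    · cases a with
      | L c j => exact ⟨j, !c, by cases c <;> simp [potV, pot]⟩
      | R c j => exact ⟨fin0 m, !c, by cases c <;> simp [potV, pot]⟩
      | R' c j => exact ⟨fin0 m, !c, by cases c <;> simp [potV, pot]⟩
      | lk c => exact ⟨fin0 m, !c, by cases c <;> simp [potV, pot]⟩
      | lk1 c => exact ⟨fin0 m, !c, by cases c <;> simp [potV, pot]⟩
      | rk c => exact ⟨fin0 m, !c, by cases c <;> simp [potV, pot]⟩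
      | rk1 c => exact ⟨fin0 m, !c, by cases c <;> simp [potV, pot]⟩
      | F c b => exact ⟨fin0 m, !c, by cases c <;> simp [potV, pot]⟩
      | T c b => exact ⟨fin0 m, !c, by cases c <;> simp [potV, pot]⟩
      | F' c b => exact ⟨fin0 m, !c, by cases c <;> simp [potV, pot]⟩
      | T' c b => exact ⟨fin0 m, !c, by cases c <;> simp [potV, pot]⟩
      | L' j => exact ⟨j, true, by simp [potV, pot]⟩
    · cases s with
      | Llk c j =>
        refine ⟨j, !c, ?_⟩
        have h1 : pot m P j (Sb j) (!c) (Hub.L c j) = 6*P+1 := by cases c <;> simp [pot]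
        have h2 : pot m P j (Sb j) (!c) (Hub.lk c) = 6*P+1 := by cases c <;> simp [pot]
        simp only [potV, ends]; omega
      | Rrk c j =>
        refine ⟨fin0 m, !c, ?_⟩
        have h1 : pot m P (fin0 m) (Sb (fin0 m)) (!c) (Hub.R c j) = 6*P+1 := by
          cases c <;> simp [pot]
        have h2 : pot m P (fin0 m) (Sb (fin0 m)) (!c) (Hub.rk c) = 6*P+1 := by
          cases c <;> simp [pot]
        simp only [potV, ends]; omega
      | lklk1 c =>
        refine ⟨fin0 m, !c, ?_⟩
        have h1 : pot m P (fin0 m) (Sb (fin0 m)) (!c) (Hub.lk c) = 6*P+1 := by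
          cases c <;> simp [pot]
        have h2 : pot m P (fin0 m) (Sb (fin0 m)) (!c) (Hub.lk1 c) = 6*P+1 := by
          cases c <;> simp [pot]
        simp only [potV, ends]; omega
      | rkrk1 c =>
        refine ⟨fin0 m, !c, ?_⟩
        have h1 : pot m P (fin0 m) (Sb (fin0 m)) (!c) (Hub.rk c) = 6*P+1 := by
          cases c <;> simp [pot]
        have h2 : pot m P (fin0 m) (Sb (fin0 m)) (!c) (Hub.rk1 c) = 6*P+1 := by
          cases c <;> simp [pot]
        simp only [potV, ends]; omega
      | lk1rk1 c => exact absurd (show (t:ℕ) < 0 from t.isLt) (by omega)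
      | FT' c b => exact absurd (show (t:ℕ) < 0 from t.isLt) (by omega)
      | TF' c b => exact absurd (show (t:ℕ) < 0 from t.isLt) (by omega)
      | Lbit c j b =>
        refine ⟨j, !c, ?_⟩
        have h1 : pot m P j (Sb j) (!c) (Hub.L c j) = 6*P+1 := by cases c <;> simp [pot]
        cases hbit : Nat.testBit j.val b.val with
        | true =>
          have h2 : pot m P j (Sb j) (!c) (Hub.T c b) = 6*P+1 := by cases c <;> simp [pot]
          simp only [potV, ends, hbit, if_true]; omega
        | false =>
          have h2 : pot m P j (Sb j) (!c) (Hub.F c b) = 6*P+1 := by cases c <;> simp [pot]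
          simp only [potV, ends, hbit, Bool.false_eq_true, if_false]; omega
      | Rbit c j b =>
        refine ⟨fin0 m, !c, ?_⟩
        have h1 : pot m P (fin0 m) (Sb (fin0 m)) (!c) (Hub.R c j) = 6*P+1 := by
          cases c <;> simp [pot]
        cases hbit : Nat.testBit j.val b.val with
        | true =>
          have h2 : pot m P (fin0 m) (Sb (fin0 m)) (!c) (Hub.T' c b) = 6*P+1 := by
            cases c <;> simp [pot]
          simp only [potV, ends, hbit, if_true]; omega
        | false =>
          have h2 : pot m P (fin0 m) (Sb (fin0 m)) (!c) (Hub.F' c b) = 6*P+1 := by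
            cases c <;> simp [pot]
          simp only [potV, ends, hbit, Bool.false_eq_true, if_false]; omega
      | R'R c j =>
        refine ⟨fin0 m, !c, ?_⟩
        have h1 : pot m P (fin0 m) (Sb (fin0 m)) (!c) (Hub.R' c j) = 6*P+1 := by
          cases c <;> simp [pot]
        have h2 : pot m P (fin0 m) (Sb (fin0 m)) (!c) (Hub.R c j) = 6*P+1 := by
          cases c <;> simp [pot]
        simp only [potV, ends]; omega
      | L'L c j =>
        refine ⟨j, !c, ?_⟩
        have h1 : pot m P j (Sb j) (!c) (Hub.L' j) = 6*P+1 := by simp [pot]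
        have h2 : pot m P j (Sb j) (!c) (Hub.L c j) = 6*P+1 := by cases c <;> simp [pot]
        simp only [potV, ends]; omega
      | Slk1 c j hs =>
        refine ⟨j, !c, ?_⟩
        have h1 : pot m P j (Sb j) (!c) (Hub.L c j) = 6*P+1 := by cases c <;> simp [pot]
        have h2 : pot m P j (Sb j) (!c) (Hub.lk1 c) = 6*P+1 := by cases c <;> simp [pot]
        simp only [potV, ends]; omega
      | Srk1 c j hs =>
        refine ⟨fin0 m, !c, ?_⟩
        have h1 : pot m P (fin0 m) (Sb (fin0 m)) (!c) (Hub.R c j) = 6*P+1 := by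
          cases c <;> simp [pot]
        have h2 : pot m P (fin0 m) (Sb (fin0 m)) (!c) (Hub.rk1 c) = 6*P+1 := by
          cases c <;> simp [pot]
        simp only [potV, ends]; omega
  obtain ⟨i0, τ, hu⟩ := key
  refine ⟨Sum.inl (Hub.R' τ i0), dist_ge hP disj i0 τ
    ((reach_all hP u).trans (reach_all hP _).symm) (by simp [potV, pot]) hu⟩

end Reach

theorem statement15 (m P : ℕ) (hm : 1 ≤ m) (hP : 1 ≤ P)
    (Sa Sb : Fin (2 ^ m) → Bool) :
    ((∃ i : Fin (2 ^ m), Sa i = true ∧ Sb i = true) →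
      ∃ u : V m P Sa Sb, ∀ v : V m P Sa Sb,
        (RA m P Sa Sb).dist u v ≤ 4 * P + 1) ∧
    ((∀ i : Fin (2 ^ m), Sa i = false ∨ Sb i = false) →
      ∀ u : V m P Sa Sb, ∃ v : V m P Sa Sb,
        6 * P + 1 ≤ (RA m P Sa Sb).dist u v) := by
  constructor
  · rintro ⟨i, ha, hb⟩
    exact ⟨Sum.inl (Hub.L' i), upper hP i ha hb⟩
  · intro disj u
    exact lower hP disj u

end RadApprox
end

section
/- If for every index 0 ≤ i ≤ k−1 either S_a(i) = 0 or S_b(i) = 0, then H is an (α, β)-spanner of G(S_a, S_b); that is, d_H(u, v) ≤ α·d_G(u, v) + β for all vertices u, v. -/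
namespace SpannerGadget

/-- Hub vertices of the spanner gadget `H`. -/
inductive Hub (m : ℕ) : Type
  | L : Fin (2 ^ m) → Hub m
  | R : Fin (2 ^ m) → Hub m
  | lk1 : Hub m
  | rk1 : Hub m
  | lk2 : Hub m
  | rk2 : Hub m
  | F : Fin m → Hub m
  | T : Fin m → Hub m
  | F' : Fin m → Hub m
  | T' : Fin m → Hub m

/-- Segments (paths between hubs) of the spanner gadget `H`,
with `P = α + β`. -/
inductive Seg (m : ℕ) : Type
  | Lbit : Fin (2 ^ m) → Fin m → Seg m   -- ℓ_i – (f_j or t_j), length P/2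
  | Rbit : Fin (2 ^ m) → Fin m → Seg m   -- r_i – (f'_j or t'_j), length P/2
  | FT' : Fin m → Seg m                  -- edge f_j – t'_j
  | TF' : Fin m → Seg m                  -- edge t_j – f'_j
  | Llk1 : Fin (2 ^ m) → Seg m           -- ℓ_i – ℓ_{k+1}, length P
  | Rrk1 : Fin (2 ^ m) → Seg m           -- r_i – r_{k+1}, length P
  | Llk2 : Fin (2 ^ m) → Seg m           -- ℓ_i – ℓ_{k+2}, length P/2
  | Rrk2 : Fin (2 ^ m) → Seg m           -- r_i – r_{k+2}, length P/2
  | lk1rk1 : Seg m                       -- edge ℓ_{k+1} – r_{k+1}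

open Hub Seg

/-- Endpoints of each segment. -/
def ends (m : ℕ) : Seg m → Hub m × Hub m
  | Lbit i j => (L i, if Nat.testBit i.val j.val then T j else F j)
  | Rbit i j => (R i, if Nat.testBit i.val j.val then T' j else F' j)
  | FT' j => (F j, T' j)
  | TF' j => (T j, F' j)
  | Llk1 i => (L i, lk1)
  | Rrk1 i => (R i, rk1)
  | Llk2 i => (L i, lk2)
  | Rrk2 i => (R i, rk2)
  | lk1rk1 => (lk1, rk1)

/-- Length of each segment, where `α` and `β` are the spanner parameters and
`P = α + β`. -/
def len (m α β : ℕ) : Seg m → ℕ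
  | FT' _ => 1
  | TF' _ => 1
  | lk1rk1 => 1
  | Llk1 _ => α + β
  | Rrk1 _ => α + β
  | _ => (α + β) / 2

/-- Vertices of the spanner gadget `H` (and of `G(S_a,S_b)`). -/
abbrev V (m α β : ℕ) : Type := Hub m ⊕ (s : Seg m) × Fin (len m α β s - 1)

/-- The spanner gadget `H`. -/
def H (m α β : ℕ) : SimpleGraph (V m α β) := segGraph (ends m) (len m α β)

/-- Extra edges depending on the input strings: an edge `ℓ_i–ℓ_{k+1}` for each
`i` with `S_a(i) = 1` and an edge `r_i–r_{k+1}` for each `i` with `S_b(i) = 1`. -/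
def extraRel (m α β : ℕ) (Sa Sb : Fin (2 ^ m) → Bool) : V m α β → V m α β → Prop
  | Sum.inl (L i), Sum.inl lk1 => Sa i = true
  | Sum.inl (R i), Sum.inl rk1 => Sb i = true
  | _, _ => False

/-- The graph `G(S_a, S_b)`: the gadget `H` together with the input edges. -/
def G (m α β : ℕ) (Sa Sb : Fin (2 ^ m) → Bool) : SimpleGraph (V m α β) :=
  H m α β ⊔ SimpleGraph.fromRel (extraRel m α β Sa Sb)

end SpannerGadget

namespace SimpleGraph

variable {V : Type*} {G H : SimpleGraph V} {S : Set V} {u v w : V}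

lemma edist_le_of_le_add {a b c : ℕ} (huv : G.edist u v ≤ a) (hvw : G.edist v w ≤ b)
    (h : a + b ≤ c) : G.edist u w ≤ c :=
  SimpleGraph.edist_triangle.trans ((add_le_add huv hvw).trans (by exact_mod_cast h))

lemma edist_triangle4 {x y : V} : G.edist u v ≤ G.edist u x + G.edist x y + G.edist y v :=
  (SimpleGraph.edist_triangle (v := y)).trans (by gcongr; exact SimpleGraph.edist_triangle)

lemma Adj.edist_le_one (h : G.Adj u v) : G.edist u v ≤ 1 :=
  (edist_eq_one_iff_adj.2 h).le

lemma Walk.edist_le_length_or_exists_mem (hHG : H ≤ G)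
    (hS : ∀ ⦃x y⦄, G.Adj x y → H.Adj x y ∨ x ∈ S ∧ y ∈ S) (p : G.Walk u v) :
    H.edist u v ≤ p.length ∨
      ∃ x ∈ S, ∃ y ∈ S, H.edist u x + G.edist x y + H.edist y v ≤ p.length := by
  induction p with
  | nil => exact .inl (by simp)
  | @cons u u' v h p ih =>
    have hlen : ((cons h p).length : ℕ∞) = 1 + p.length := by simp [add_comm]
    rw [hlen]
    rcases hS h with hH | ⟨hu, hu'⟩
    · rcases ih with ih | ⟨x, hx, y, hy, ih⟩
      · exact .inl ((SimpleGraph.edist_triangle (v := u')).trans (add_le_add hH.edist_le_one ih))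
      · refine .inr ⟨x, hx, y, hy, ?_⟩
        calc H.edist u x + G.edist x y + H.edist y v
            ≤ H.edist u u' + H.edist u' x + G.edist x y + H.edist y v := by
              gcongr; exact SimpleGraph.edist_triangle
          _ = H.edist u u' + (H.edist u' x + G.edist x y + H.edist y v) := by ring
          _ ≤ 1 + p.length := add_le_add hH.edist_le_one ih
    · refine .inr ?_
      rcases ih with ih | ⟨x, hx, y, hy, ih⟩
      · exact ⟨u, hu, u', hu', by simpa using add_le_add h.edist_le_one ih⟩
      · refine ⟨u, hu, y, hy, ?_⟩
        calc H.edist u u + G.edist u y + H.edist y v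
            = G.edist u y + H.edist y v := by rw [edist_self, zero_add]
          _ ≤ G.edist u u' + G.edist u' x + G.edist x y + H.edist y v := by
              gcongr; exact edist_triangle4
          _ ≤ G.edist u u' + H.edist u' x + G.edist x y + H.edist y v := by
              gcongr
          _ = G.edist u u' + (H.edist u' x + G.edist x y + H.edist y v) := by ring
          _ ≤ 1 + p.length := add_le_add h.edist_le_one ih

theorem edist_le_mul_add_of_forall_mem {α β : ℕ} (hα : 1 ≤ α) (hHG : H ≤ G)
    (hS : ∀ ⦃x y⦄, G.Adj x y → H.Adj x y ∨ x ∈ S ∧ y ∈ S)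
    (hSpan : ∀ x ∈ S, ∀ y ∈ S, H.edist x y ≤ α * G.edist x y + β) (u v : V) :
    H.edist u v ≤ α * G.edist u v + β := by
  have hα' : (1 : ℕ∞) ≤ α := by exact_mod_cast hα
  by_cases hr : G.Reachable u v
  · obtain ⟨p, hp⟩ := hr.exists_walk_length_eq_edist
    rw [← hp]
    rcases p.edist_le_length_or_exists_mem hHG hS with h | ⟨x, hx, y, hy, h⟩
    · exact h.trans (le_add_right (le_mul_of_one_le_left' hα'))
    · calc H.edist u v ≤ H.edist u x + H.edist x y + H.edist y v := edist_triangle4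
        _ ≤ α * H.edist u x + (α * G.edist x y + β) + α * H.edist y v := by
            gcongr
            · exact le_mul_of_one_le_left' hα'
            · exact hSpan x hx y hy
            · exact le_mul_of_one_le_left' hα'
        _ = α * (H.edist u x + G.edist x y + H.edist y v) + β := by ring
        _ ≤ α * p.length + β := by gcongr
  · rw [edist_eq_top_of_not_reachable hr, ENat.mul_top (by positivity)]
    simp

lemma dist_le_mul_add_of_edist_le {α β : ℕ} (hHG : H ≤ G)
    (h : H.edist u v ≤ α * G.edist u v + β) : H.dist u v ≤ α * G.dist u v + β := by
  by_cases hr : H.Reachable u v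
  · rw [← hr.coe_dist_eq_edist, ← (hr.mono hHG).coe_dist_eq_edist] at h
    exact_mod_cast h
  · simp [dist_eq_zero_of_not_reachable hr]

end SimpleGraph

section segGraph

open SimpleGraph

variable {Hub Seg : Type} {ends : Seg → Hub × Hub} {len : Seg → ℕ}

lemma segGraph_adj_inl_inl {s : Seg} (h1 : len s = 1) (hne : (ends s).1 ≠ (ends s).2) :
    (segGraph ends len).Adj (Sum.inl (ends s).1) (Sum.inl (ends s).2) := by
  rw [segGraph, fromRel_adj]
  exact ⟨by simp [hne], .inl ⟨s, h1, rfl⟩⟩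

lemma segGraph_adj_start {s : Seg} (h : 0 < len s - 1) :
    (segGraph ends len).Adj (Sum.inl (ends s).1) (Sum.inr ⟨s, ⟨0, h⟩⟩) := by
  rw [segGraph, fromRel_adj]
  exact ⟨by simp, .inl (.inl ⟨rfl, rfl⟩)⟩

lemma segGraph_adj_end {s : Seg} {t : ℕ} (ht : t + 2 = len s) :
    (segGraph ends len).Adj (Sum.inr ⟨s, ⟨t, by omega⟩⟩) (Sum.inl (ends s).2) := by
  rw [segGraph, fromRel_adj]
  exact ⟨by simp, .inl (.inr ⟨rfl, ht⟩)⟩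

lemma segGraph_adj_succ {s : Seg} {t : ℕ} (h : t + 1 < len s - 1) :
    (segGraph ends len).Adj (Sum.inr ⟨s, ⟨t, by omega⟩⟩) (Sum.inr ⟨s, ⟨t + 1, h⟩⟩) := by
  rw [segGraph, fromRel_adj]
  exact ⟨by simp [Fin.ext_iff], .inl ⟨rfl, .inl rfl⟩⟩

lemma segGraph_edist_inr_le (s : Seg) (k : ℕ) :
    ∀ t (ht : t + 2 + k = len s),
      (segGraph ends len).edist (Sum.inr ⟨s, ⟨t, by omega⟩⟩) (Sum.inl (ends s).2) ≤
        (k + 1 : ℕ) := by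
  induction k with
  | zero => exact fun t ht => (segGraph_adj_end ht).edist_le_one
  | succ k ih =>
    exact fun t ht => edist_le_of_le_add (segGraph_adj_succ (by omega)).edist_le_one
      (ih (t + 1) (by omega)) (by omega)

lemma segGraph_edist_ends_le (s : Seg) (h1 : 1 ≤ len s) (hne : (ends s).1 ≠ (ends s).2) :
    (segGraph ends len).edist (Sum.inl (ends s).1) (Sum.inl (ends s).2) ≤ len s := by
  rcases h1.eq_or_lt with h | h
  · exact (segGraph_adj_inl_inl h.symm hne).edist_le_one.trans_eq (by simp [← h])
  · exact edist_le_of_le_add (segGraph_adj_start (by omega)).edist_le_one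
      (segGraph_edist_inr_le s (len s - 2) 0 (by omega)) (by omega)

end segGraph

namespace SpannerGadget

open SimpleGraph Sum Hub Seg

variable {m α β : ℕ}

lemma H_le_G (Sa Sb : Fin (2 ^ m) → Bool) : H m α β ≤ G m α β Sa Sb := le_sup_left

lemma edist_ends_le (s : Seg m) (h1 : 1 ≤ len m α β s) (hne : (ends m s).1 ≠ (ends m s).2) :
    (H m α β).edist (inl (ends m s).1) (inl (ends m s).2) ≤ len m α β s :=
  segGraph_edist_ends_le s h1 hne

lemma edist_lk1_rk1 : (H m α β).edist (inl lk1) (inl rk1) ≤ 1 :=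
  (segGraph_adj_inl_inl (s := lk1rk1) rfl (by simp [ends])).edist_le_one

lemma edist_F_T' (b : Fin m) : (H m α β).edist (inl (F b)) (inl (T' b)) ≤ 1 :=
  (segGraph_adj_inl_inl (s := FT' b) rfl (by simp [ends])).edist_le_one

lemma edist_T_F' (b : Fin m) : (H m α β).edist (inl (T b)) (inl (F' b)) ≤ 1 :=
  (segGraph_adj_inl_inl (s := TF' b) rfl (by simp [ends])).edist_le_one

lemma edist_L_lk1 (hP : 2 ≤ α + β) (i : Fin (2 ^ m)) :
    (H m α β).edist (inl (L i)) (inl lk1) ≤ (α + β : ℕ) :=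
  edist_ends_le (Llk1 i) (by simp only [len]; omega) (by simp [ends])

lemma edist_R_rk1 (hP : 2 ≤ α + β) (j : Fin (2 ^ m)) :
    (H m α β).edist (inl (R j)) (inl rk1) ≤ (α + β : ℕ) :=
  edist_ends_le (Rrk1 j) (by simp only [len]; omega) (by simp [ends])

lemma edist_L_lk2 (hP : 2 ≤ α + β) (i : Fin (2 ^ m)) :
    (H m α β).edist (inl (L i)) (inl lk2) ≤ ((α + β) / 2 : ℕ) :=
  edist_ends_le (Llk2 i) (by simp only [len]; omega) (by simp [ends])

lemma edist_R_rk2 (hP : 2 ≤ α + β) (j : Fin (2 ^ m)) :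
    (H m α β).edist (inl (R j)) (inl rk2) ≤ ((α + β) / 2 : ℕ) :=
  edist_ends_le (Rrk2 j) (by simp only [len]; omega) (by simp [ends])

lemma edist_L_L (hP : 2 ≤ α + β) (i i' : Fin (2 ^ m)) :
    (H m α β).edist (inl (L i)) (inl (L i')) ≤ (α + β : ℕ) :=
  edist_le_of_le_add (edist_L_lk2 hP i) (edist_comm ▸ edist_L_lk2 hP i') (by omega)

lemma edist_R_R (hP : 2 ≤ α + β) (j j' : Fin (2 ^ m)) :
    (H m α β).edist (inl (R j)) (inl (R j')) ≤ (α + β : ℕ) :=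
  edist_le_of_le_add (edist_R_rk2 hP j) (edist_comm ▸ edist_R_rk2 hP j') (by omega)

lemma edist_L_bit (hP : 2 ≤ α + β) (i : Fin (2 ^ m)) (b : Fin m) :
    (H m α β).edist (inl (L i)) (inl (if i.val.testBit b then T b else F b)) ≤
      ((α + β) / 2 : ℕ) :=
  edist_ends_le (Lbit i b) (by simp only [len]; omega) (by simp only [ends]; split <;> simp)

lemma edist_R_bit (hP : 2 ≤ α + β) (j : Fin (2 ^ m)) (b : Fin m) :
    (H m α β).edist (inl (R j)) (inl (if j.val.testBit b then T' b else F' b)) ≤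
      ((α + β) / 2 : ℕ) :=
  edist_ends_le (Rbit j b) (by simp only [len]; omega) (by simp only [ends]; split <;> simp)

lemma edist_L_R_of_testBit_ne (hP : 2 ≤ α + β) {i j : Fin (2 ^ m)} {b : Fin m}
    (h : i.val.testBit b ≠ j.val.testBit b) :
    (H m α β).edist (inl (L i)) (inl (R j)) ≤ (α + β + 1 : ℕ) := by
  have hL := edist_L_bit hP i b
  have hR := edist_comm ▸ edist_R_bit hP j b
  cases hi : i.val.testBit b <;> cases hj : j.val.testBit b <;>
    simp only [hi, hj, ne_eq, not_true_eq_false, Bool.false_eq_true, if_true, if_false] at h hL hR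
  · exact edist_le_of_le_add hL (edist_le_of_le_add (edist_F_T' b) hR le_rfl) (by omega)
  · exact edist_le_of_le_add hL (edist_le_of_le_add (edist_T_F' b) hR le_rfl) (by omega)

lemma exists_testBit_ne {i j : Fin (2 ^ m)} (h : i ≠ j) :
    ∃ b : Fin m, i.val.testBit b ≠ j.val.testBit b := by
  obtain ⟨b, hb⟩ := Nat.exists_testBit_ne_of_ne (Fin.val_ne_of_ne h)
  refine ⟨⟨b, ?_⟩, hb⟩
  by_contra! hbm
  have hpow := Nat.pow_le_pow_right two_pos hbm
  rw [Nat.testBit_lt_two_pow (i.2.trans_le hpow), Nat.testBit_lt_two_pow (j.2.trans_le hpow)] at hb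
  exact hb rfl

def leftCluster (Sa : Fin (2 ^ m) → Bool) : Set (V m α β) :=
  {x | x = inl lk1 ∨ ∃ i, Sa i = true ∧ x = inl (L i)}

def rightCluster (Sb : Fin (2 ^ m) → Bool) : Set (V m α β) :=
  {x | x = inl rk1 ∨ ∃ j, Sb j = true ∧ x = inl (R j)}

def cluster (Sa Sb : Fin (2 ^ m) → Bool) : Set (V m α β) := leftCluster Sa ∪ rightCluster Sb

variable {Sa Sb : Fin (2 ^ m) → Bool} {x y : V m α β}

lemma edist_le_of_mem_leftCluster (hP : 2 ≤ α + β) (hx : x ∈ leftCluster Sa)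
    (hy : y ∈ leftCluster Sa) : (H m α β).edist x y ≤ (α + β : ℕ) := by
  rcases hx with rfl | ⟨i, -, rfl⟩ <;> rcases hy with rfl | ⟨i', -, rfl⟩
  · simp
  · exact edist_comm ▸ edist_L_lk1 hP i'
  · exact edist_L_lk1 hP i
  · exact edist_L_L hP i i'

lemma edist_le_of_mem_rightCluster (hP : 2 ≤ α + β) (hx : x ∈ rightCluster Sb)
    (hy : y ∈ rightCluster Sb) : (H m α β).edist x y ≤ (α + β : ℕ) := by
  rcases hx with rfl | ⟨j, -, rfl⟩ <;> rcases hy with rfl | ⟨j', -, rfl⟩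
  · simp
  · exact edist_comm ▸ edist_R_rk1 hP j'
  · exact edist_R_rk1 hP j
  · exact edist_R_R hP j j'

lemma edist_le_of_mem_leftCluster_of_mem_rightCluster (hP : 2 ≤ α + β)
    (h : ∀ i, Sa i = false ∨ Sb i = false) (hx : x ∈ leftCluster Sa)
    (hy : y ∈ rightCluster Sb) : (H m α β).edist x y ≤ (α + β + 1 : ℕ) := by
  rcases hx with rfl | ⟨i, hi, rfl⟩ <;> rcases hy with rfl | ⟨j, hj, rfl⟩
  · exact edist_lk1_rk1.trans (by exact_mod_cast le_add_self)
  · exact edist_le_of_le_add edist_lk1_rk1 (edist_comm ▸ edist_R_rk1 hP j) (by omega)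
  · exact edist_le_of_le_add (edist_L_lk1 hP i) edist_lk1_rk1 le_rfl
  · obtain ⟨b, hb⟩ := exists_testBit_ne (i := i) (j := j) (by rintro rfl; cases h i <;> simp_all)
    exact edist_L_R_of_testBit_ne hP hb

lemma edist_le_of_mem_cluster (hP : 2 ≤ α + β) (h : ∀ i, Sa i = false ∨ Sb i = false)
    (hx : x ∈ cluster Sa Sb) (hy : y ∈ cluster Sa Sb) :
    (H m α β).edist x y ≤ (α + β + 1 : ℕ) := by
  rcases hx with hx | hx <;> rcases hy with hy | hy
  · exact (edist_le_of_mem_leftCluster hP hx hy).trans (by exact_mod_cast Nat.le_succ _)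
  · exact edist_le_of_mem_leftCluster_of_mem_rightCluster hP h hx hy
  · exact edist_comm ▸ edist_le_of_mem_leftCluster_of_mem_rightCluster hP h hy hx
  · exact (edist_le_of_mem_rightCluster hP hx hy).trans (by exact_mod_cast Nat.le_succ _)

lemma extraRel_cases (hxy : extraRel m α β Sa Sb x y) :
    (∃ i, Sa i = true ∧ x = inl (L i) ∧ y = inl lk1) ∨
      (∃ j, Sb j = true ∧ x = inl (R j) ∧ y = inl rk1) := by
  rcases x with (_ | _ | _ | _ | _ | _ | _ | _ | _ | _) | _ <;>
    rcases y with (_ | _ | _ | _ | _ | _ | _ | _ | _ | _) | _ <;>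
    first
      | exact .inl ⟨_, hxy, rfl, rfl⟩
      | exact .inr ⟨_, hxy, rfl, rfl⟩
      | exact hxy.elim

lemma mem_cluster_of_extraRel (hxy : extraRel m α β Sa Sb x y) :
    x ∈ cluster Sa Sb ∧ y ∈ cluster Sa Sb := by
  rcases extraRel_cases hxy with ⟨i, hi, rfl, rfl⟩ | ⟨j, hj, rfl, rfl⟩
  · exact ⟨.inl (.inr ⟨i, hi, rfl⟩), .inl (.inl rfl)⟩
  · exact ⟨.inr (.inr ⟨j, hj, rfl⟩), .inr (.inl rfl)⟩

lemma edist_le_of_extraRel (hP : 2 ≤ α + β) (hxy : extraRel m α β Sa Sb x y) :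
    (H m α β).edist x y ≤ (α + β : ℕ) := by
  rcases extraRel_cases hxy with ⟨i, -, rfl, rfl⟩ | ⟨j, -, rfl, rfl⟩
  exacts [edist_L_lk1 hP i, edist_R_rk1 hP j]

lemma G_adj_cases (hxy : (G m α β Sa Sb).Adj x y) :
    (H m α β).Adj x y ∨ extraRel m α β Sa Sb x y ∨ extraRel m α β Sa Sb y x := by
  rw [G, sup_adj, fromRel_adj] at hxy
  tauto

lemma H_adj_or_mem_cluster_of_G_adj (hxy : (G m α β Sa Sb).Adj x y) :
    (H m α β).Adj x y ∨ x ∈ cluster Sa Sb ∧ y ∈ cluster Sa Sb := by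
  rcases G_adj_cases hxy with hxy | hxy | hxy
  · exact .inl hxy
  · exact .inr (mem_cluster_of_extraRel hxy)
  · exact .inr (mem_cluster_of_extraRel hxy).symm

lemma edist_le_of_G_adj (hP : 2 ≤ α + β) (hxy : (G m α β Sa Sb).Adj x y) :
    (H m α β).edist x y ≤ (α + β : ℕ) := by
  rcases G_adj_cases hxy with hxy | hxy | hxy
  · exact hxy.edist_le_one.trans (by exact_mod_cast hP.trans' one_le_two)
  · exact edist_le_of_extraRel hP hxy
  · exact edist_comm ▸ edist_le_of_extraRel hP hxy

lemma edist_le_mul_add_of_mem_cluster (hα : 1 ≤ α) (hP : 2 ≤ α + β)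
    (h : ∀ i, Sa i = false ∨ Sb i = false) (hx : x ∈ cluster Sa Sb) (hy : y ∈ cluster Sa Sb) :
    (H m α β).edist x y ≤ α * (G m α β Sa Sb).edist x y + β := by
  rcases le_or_gt ((G m α β Sa Sb).edist x y) 1 with h1 | h2
  · rcases edist_le_one_iff_adj_or_eq.1 h1 with hxy | rfl
    · rw [edist_eq_one_iff_adj.2 hxy, mul_one]
      exact_mod_cast edist_le_of_G_adj hP hxy
    · simp
  · calc (H m α β).edist x y ≤ (α + β + 1 : ℕ) := edist_le_of_mem_cluster hP h hx hy
      _ ≤ α * 2 + β := by norm_cast; omega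
      _ ≤ α * (G m α β Sa Sb).edist x y + β := by
          gcongr
          exact Order.add_one_le_of_lt h2

theorem statement19_general (m α β : ℕ) (hα : 1 ≤ α)
    (heven : Even (α + β)) (hpos : 0 < α + β)
    (Sa Sb : Fin (2 ^ m) → Bool)
    (h : ∀ i : Fin (2 ^ m), Sa i = false ∨ Sb i = false) :
    ∀ u v : V m α β,
      (H m α β).dist u v ≤ α * (G m α β Sa Sb).dist u v + β := by
  have hP : 2 ≤ α + β := by obtain ⟨c, hc⟩ := heven; omega
  intro u v
  refine dist_le_mul_add_of_edist_le (H_le_G Sa Sb) ?_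
  exact edist_le_mul_add_of_forall_mem hα (H_le_G Sa Sb) (fun _ _ => H_adj_or_mem_cluster_of_G_adj)
    (fun _ hx _ hy => edist_le_mul_add_of_mem_cluster hα hP h hx hy) u v

theorem statement19 (m α β : ℕ) (hm : 1 ≤ m) (hα : 1 ≤ α)
    (heven : Even (α + β)) (hpos : 0 < α + β)
    (Sa Sb : Fin (2 ^ m) → Bool)
    (h : ∀ i : Fin (2 ^ m), Sa i = false ∨ Sb i = false) :
    ∀ u v : V m α β,
      (H m α β).dist u v ≤ α * (G m α β Sa Sb).dist u v + β :=
  statement19_general m α β hα heven hpos Sa Sb h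

end SpannerGadget
end
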